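/- Let g ≥ 12 be a natural number, set k = ⌈(g/2)^{2/3}⌉ + 1, let n ≥ 1, and let p_1 ≤ p_2 ≤ … ≤ p_n be positive reals. Let τ_1, …, τ_n be independent real random variables where τ_j has the Gamma distribution with shape k and rate g/p_j. Then Σ_{j=1}^n p_j + Σ_{1≤i<j≤n} E[ p_i + min(τ_i, τ_j) + (p_j − p_i)·𝟙(τ_j < τ_i) ] ≤ (1 + (12/g)^{1/3}) · Σ_{i=1}^n (n − i + 1)·p_i. -/

import Mathlib

/-!
For `i < j`, the pair term is at most `p i + E[τ i] + (p j - p i) P(τ j < τ i)`, where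
`E[τ i] = k p i / g`. A Chernoff bound using the exponential moments of the two independent Gamma
variables, tilted so that both rates become their average, gives
`P(τ j < τ i) ≤ (4 p i p j / (p i + p j)²) ^ k`. Writing `u = (p j - p i) / (p j + p i)` and
`k = m + 1`, the pair term is thus at most `p i (1 + (m + 1) / g + 2u(1 + u)(1 - u²) ^ m)`, and the
scalar inequality `2u(1 + u)(1 - u²) ^ m + (m + 1) / g ≤ (12 / g) ^ (1/3)` holds for all
`u ∈ [0, 1]`: for `g ≥ 33` via `1 - u² ≤ exp (-u²)` and `y e^{-y} ≤ e^{-1}`, and for `12 ≤ g ≤ 32`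
via AM-GM and a numerical check for each `g`. Summing over the `n - i` partners of each job `i`
gives the bound.
-/

open MeasureTheory ProbabilityTheory Real Set

section GammaMoments

variable {a r : ℝ}

lemma integrable_gammaMeasure_iff (ha : 0 < a) (hr : 0 < r) {f : ℝ → ℝ} :
    Integrable f (gammaMeasure a r) ↔ Integrable (fun x => gammaPDFReal a r x * f x) := by
  rw [gammaMeasure, integrable_withDensity_iff_integrable_smul' (f := gammaPDF a r)
    (measurable_gammaPDFReal a r).ennreal_ofReal (ae_of_all _ fun _ => ENNReal.ofReal_lt_top)]
  simp only [gammaPDF, ENNReal.toReal_ofReal (gammaPDFReal_nonneg ha hr _), smul_eq_mul]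

lemma integral_gammaMeasure (ha : 0 < a) (hr : 0 < r) (f : ℝ → ℝ) :
    ∫ x, f x ∂gammaMeasure a r = ∫ x, gammaPDFReal a r x * f x := by
  rw [gammaMeasure, integral_withDensity_eq_integral_toReal_smul (f := gammaPDF a r)
    (measurable_gammaPDFReal a r).ennreal_ofReal (ae_of_all _ fun _ => ENNReal.ofReal_lt_top)]
  simp only [gammaPDF, ENNReal.toReal_ofReal (gammaPDFReal_nonneg ha hr _), smul_eq_mul]

lemma gammaPDFReal_mul_pow_mul_exp_ae_eq (n : ℕ) (θ : ℝ) :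
    (fun x => gammaPDFReal a r x * (x ^ n * exp (θ * x))) =ᵐ[volume] (Ioi 0).indicator
      (fun x => r ^ a / Gamma a * (x ^ (a + n - 1) * exp (-((r - θ) * x)))) := by
  filter_upwards [volume.ae_ne 0] with x hx0
  unfold gammaPDFReal
  rcases hx0.lt_or_gt with hx | hx
  · rw [if_neg hx.not_ge, indicator_of_notMem (by simpa using hx.le), zero_mul]
  · have hexp : exp (-((r - θ) * x)) = exp (-(r * x)) * exp (θ * x) := by
      rw [← exp_add]; ring_nf
    rw [if_pos hx.le, indicator_of_mem (mem_Ioi.2 hx), add_sub_right_comm, rpow_add hx,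
      rpow_natCast, hexp]
    ring

theorem integrable_pow_mul_exp_gammaMeasure (ha : 0 < a) (hr : 0 < r) (n : ℕ) {θ : ℝ}
    (hθ : θ < r) : Integrable (fun x => x ^ n * exp (θ * x)) (gammaMeasure a r) := by
  rw [integrable_gammaMeasure_iff ha hr, integrable_congr (gammaPDFReal_mul_pow_mul_exp_ae_eq n θ),
    integrable_indicator_iff measurableSet_Ioi]
  refine Integrable.const_mul ?_ _
  refine (integrableOn_rpow_mul_exp_neg_mul_rpow (s := a + n - 1)
    (by linarith [(n.cast_nonneg : (0 : ℝ) ≤ n)]) one_pos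
    (sub_pos.2 hθ)).congr_fun (fun x _ => ?_) measurableSet_Ioi
  simp only [rpow_one, neg_mul]

theorem integral_pow_mul_exp_gammaMeasure (ha : 0 < a) (hr : 0 < r) (n : ℕ) {θ : ℝ}
    (hθ : θ < r) : ∫ x, x ^ n * exp (θ * x) ∂gammaMeasure a r
      = r ^ a / Gamma a * ((1 / (r - θ)) ^ (a + n) * Gamma (a + n)) := by
  rw [integral_gammaMeasure ha hr, integral_congr_ae (gammaPDFReal_mul_pow_mul_exp_ae_eq n θ),
    integral_indicator measurableSet_Ioi, integral_const_mul,
    integral_rpow_mul_exp_neg_mul_Ioi (by positivity) (sub_pos.2 hθ)]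

lemma integrable_id_gammaMeasure (ha : 0 < a) (hr : 0 < r) :
    Integrable (fun x => x) (gammaMeasure a r) := by
  simpa using integrable_pow_mul_exp_gammaMeasure ha hr 1 hr

lemma integral_id_gammaMeasure (ha : 0 < a) (hr : 0 < r) :
    ∫ x, x ∂gammaMeasure a r = a / r := by
  have h := integral_pow_mul_exp_gammaMeasure ha hr 1 hr
  simp only [pow_one, zero_mul, exp_zero, mul_one, Nat.cast_one, sub_zero] at h
  rw [h, Gamma_add_one ha.ne', rpow_add_one (by positivity), div_rpow zero_le_one hr.le, one_rpow]
  have := (Gamma_pos_of_pos ha).ne'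
  have := (rpow_pos_of_pos hr a).ne'
  field_simp

lemma integrable_exp_mul_gammaMeasure (ha : 0 < a) (hr : 0 < r) {θ : ℝ} (hθ : θ < r) :
    Integrable (fun x => exp (θ * x)) (gammaMeasure a r) := by
  simpa using integrable_pow_mul_exp_gammaMeasure ha hr 0 hθ

lemma mgf_id_gammaMeasure (ha : 0 < a) (hr : 0 < r) {θ : ℝ} (hθ : θ < r) :
    mgf id (gammaMeasure a r) θ = (r / (r - θ)) ^ a := by
  have h := integral_pow_mul_exp_gammaMeasure ha hr 0 hθ
  simp only [pow_zero, one_mul, Nat.cast_zero, add_zero] at h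
  simp only [mgf, id]
  rw [h, div_rpow hr.le (sub_pos.2 hθ).le, div_rpow zero_le_one (sub_pos.2 hθ).le, one_rpow]
  have := (Gamma_pos_of_pos ha).ne'
  field_simp

end GammaMoments

section PairCost

variable {Ω : Type*} [MeasurableSpace Ω] {P : Measure Ω} {X Y : Ω → ℝ}

lemma ProbabilityTheory.HasLaw.integrable_comp {𝓧 E : Type*} [MeasurableSpace 𝓧]
    [NormedAddCommGroup E] {μ : Measure 𝓧} {Z : Ω → 𝓧} (hZ : HasLaw Z μ P) {f : 𝓧 → E}
    (hf : Integrable f μ) : Integrable (fun ω => f (Z ω)) P :=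
  (hZ.map_eq ▸ hf).comp_aemeasurable hZ.aemeasurable

lemma integrable_ite_lt [IsFiniteMeasure P] (hX : Measurable X) (hY : Measurable Y) :
    Integrable (fun ω => if Y ω < X ω then (1 : ℝ) else 0) P :=
  (integrable_const 1).mono' (measurable_const.ite (measurableSet_lt hY hX)
    measurable_const).aestronglyMeasurable (ae_of_all _ fun ω => by split_ifs <;> simp)

lemma integral_ite_lt_le_mgf_mul_mgf [IsFiniteMeasure P] (hX : Measurable X) (hY : Measurable Y)
    (hXY : IndepFun X Y P) {θ : ℝ} (hθ : 0 ≤ θ) (hiX : Integrable (fun ω => exp (θ * X ω)) P)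
    (hiY : Integrable (fun ω => exp (-θ * Y ω)) P) :
    ∫ ω, (if Y ω < X ω then (1 : ℝ) else 0) ∂P ≤ mgf X P θ * mgf Y P (-θ) := by
  have hexp := hXY.exp_mul θ (-θ)
  rw [mgf, mgf, ← hexp.integral_fun_mul_eq_mul_integral hiX.aestronglyMeasurable
    hiY.aestronglyMeasurable]
  refine integral_mono (integrable_ite_lt hX hY) (hexp.integrable_mul hiX hiY) fun ω => ?_
  dsimp only
  split_ifs with h
  · rw [← exp_add]
    exact one_le_exp (by nlinarith)
  · positivity

lemma integral_ite_lt_le_of_hasLaw_gammaMeasure [IsFiniteMeasure P] (hXm : Measurable X)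
    (hYm : Measurable Y) (hXY : IndepFun X Y P) {a s t : ℝ} (ha : 0 < a) (ht : 0 < t)
    (hts : t ≤ s) (hX : HasLaw X (gammaMeasure a s) P) (hY : HasLaw Y (gammaMeasure a t) P) :
    ∫ ω, (if Y ω < X ω then (1 : ℝ) else 0) ∂P ≤ (4 * s * t / (s + t) ^ 2) ^ a := by
  have hs : 0 < s := ht.trans_le hts
  -- the optimal Chernoff parameter: both tilted rates become `(s + t) / 2`
  set θ := (s - t) / 2 with hθ
  have hθs : θ < s := by linarith
  have hθt : -θ < t := by linarith
  calc ∫ ω, (if Y ω < X ω then (1 : ℝ) else 0) ∂P ≤ mgf X P θ * mgf Y P (-θ) :=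
        integral_ite_lt_le_mgf_mul_mgf hXm hYm hXY (by linarith)
          (hX.integrable_comp (integrable_exp_mul_gammaMeasure ha hs hθs))
          (hY.integrable_comp (integrable_exp_mul_gammaMeasure ha ht hθt))
    _ = (s / (s - θ)) ^ a * (t / (t - -θ)) ^ a := by
        rw [← mgf_id_map hX.aemeasurable, ← mgf_id_map hY.aemeasurable, hX.map_eq, hY.map_eq,
          mgf_id_gammaMeasure ha hs hθs, mgf_id_gammaMeasure ha ht hθt]
    _ = (4 * s * t / (s + t) ^ 2) ^ a := by
        rw [← mul_rpow (by positivity) (by positivity)]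
        congr 1
        have hst : 0 < s + t := by positivity
        rw [show s - θ = (s + t) / 2 by linarith, show t - -θ = (s + t) / 2 by linarith]
        field_simp
        ring

theorem integral_pairCost_le [IsProbabilityMeasure P] (hXm : Measurable X) (hYm : Measurable Y)
    (hXY : IndepFun X Y P) {a g p q : ℝ} (ha : 0 < a) (hg : 0 < g) (hp : 0 < p) (hpq : p ≤ q)
    (hX : HasLaw X (gammaMeasure a (g / p)) P) (hY : HasLaw Y (gammaMeasure a (g / q)) P) :
    ∫ ω, (p + min (X ω) (Y ω) + (q - p) * (if Y ω < X ω then 1 else 0)) ∂P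
      ≤ p + a * p / g + (q - p) * (4 * p * q / (p + q) ^ 2) ^ a := by
  have hq : 0 < q := hp.trans_le hpq
  have hXi : Integrable X P := hX.integrable_comp (integrable_id_gammaMeasure ha (by positivity))
  have hYi : Integrable Y P := hY.integrable_comp (integrable_id_gammaMeasure ha (by positivity))
  have hmin_int : Integrable (fun ω => min (X ω) (Y ω)) P := hXi.inf hYi
  have hmin : ∫ ω, min (X ω) (Y ω) ∂P ≤ a * p / g := by
    calc ∫ ω, min (X ω) (Y ω) ∂P ≤ ∫ ω, X ω ∂P :=
          integral_mono hmin_int hXi fun ω => min_le_left _ _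
      _ = a * p / g := by
          rw [hX.integral_eq, integral_id_gammaMeasure ha (by positivity)]
          field_simp
  have htail := integral_ite_lt_le_of_hasLaw_gammaMeasure hXm hYm hXY ha (by positivity)
    (div_le_div_of_nonneg_left hg.le hp hpq) hX hY
  have hrate : 4 * (g / p) * (g / q) / (g / p + g / q) ^ 2 = 4 * p * q / (p + q) ^ 2 := by
    field_simp
    ring
  rw [hrate] at htail
  have hsum_int : Integrable (fun ω => p + min (X ω) (Y ω)) P :=
    (integrable_const p).add hmin_int
  rw [integral_add hsum_int ((integrable_ite_lt hXm hYm).const_mul _),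
    integral_add (integrable_const p) hmin_int, integral_const_mul, integral_const]
  simp only [probReal_univ, smul_eq_mul, one_mul]
  gcongr

end PairCost

lemma mul_pow_succ_mul_pow_le {a b c : ℝ} (ha : 0 ≤ a) (hb : 0 ≤ b) (hc : 0 ≤ c) (m : ℕ) :
    a * b ^ (m + 1) * c ^ m ≤ ((a + (m + 1) * b + m * c) / (2 * m + 2)) ^ (2 * m + 2) := by
  set N : ℝ := 2 * m + 2 with hN
  have hN0 : 0 < N := by positivity
  have hamgm := geom_mean_le_arith_mean3_weighted (w₁ := 1 / N) (w₂ := (m + 1) / N)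
    (w₃ := m / N) (by positivity) (by positivity) (by positivity) ha hb hc
    (by field_simp; ring)
  have hmean : 1 / N * a + (m + 1) / N * b + m / N * c = (a + (m + 1) * b + m * c) / N := by
    field_simp
  rw [hmean] at hamgm
  have hroot : ∀ {x : ℝ}, 0 ≤ x → ∀ w : ℝ, (x ^ (w / N)) ^ (2 * m + 2) = x ^ w := by
    intro x hx w
    rw [← rpow_natCast, ← rpow_mul hx]
    congr 1
    push_cast
    field_simp
    ring
  have hprod : (a ^ (1 / N) * b ^ ((m + 1) / N) * c ^ (m / N)) ^ (2 * m + 2)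
      = a * b ^ (m + 1) * c ^ m := by
    rw [mul_pow, mul_pow, hroot ha, hroot hb, hroot hc, rpow_one, ← rpow_natCast c,
      ← rpow_natCast b]
    push_cast
    rfl
  exact hprod ▸ pow_le_pow_left₀ (by positivity) hamgm (2 * m + 2)

/-- With `u = (q - p) / (q + p)`, the excess `(q - p) (4pq / (p + q)²) ^ (m + 1)` equals
`p * commitPenalty m u`. -/
def commitPenalty (m : ℕ) (u : ℝ) : ℝ := 2 * u * (1 + u) * (1 - u ^ 2) ^ m

lemma commitPenalty_nonneg (m : ℕ) {u : ℝ} (hu0 : 0 ≤ u) (hu1 : u ≤ 1) :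
    0 ≤ commitPenalty m u := by
  have : 0 ≤ 1 - u ^ 2 := by nlinarith
  unfold commitPenalty
  positivity

lemma commitPenalty_le_of_two_le {m : ℕ} (hm : 2 ≤ m) {u : ℝ} (hu0 : 0 ≤ u) (hu1 : u ≤ 1) :
    commitPenalty m u ≤ 2 * ((3 * m + 1) / (2 * m + 2)) ^ (2 * m + 2) / ((m - 1) * 2 ^ m) := by
  have hm1 : (0 : ℝ) < m - 1 := by
    have : (2 : ℝ) ≤ m := by exact_mod_cast hm
    linarith
  -- AM-GM for `(m - 1) u`, `m + 1` copies of `1 + u` and `m` copies of `2 (1 - u)`,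
  -- whose weighted sum `3m + 1` does not depend on `u`
  have h := mul_pow_succ_mul_pow_le (a := (m - 1) * u) (b := 1 + u) (c := 2 * (1 - u))
    (by positivity) (by linarith) (by linarith) m
  rw [show (m - 1) * u + (m + 1) * (1 + u) + m * (2 * (1 - u)) = (3 * m + 1 : ℝ) by ring,
    mul_pow (2 : ℝ)] at h
  rw [le_div_iff₀ (by positivity), commitPenalty,
    show (1 : ℝ) - u ^ 2 = (1 + u) * (1 - u) by ring, mul_pow]
  calc 2 * u * (1 + u) * ((1 + u) ^ m * (1 - u) ^ m) * ((m - 1) * 2 ^ m)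
      = 2 * ((m - 1) * u * (1 + u) ^ (m + 1) * (2 ^ m * (1 - u) ^ m)) := by ring
    _ ≤ 2 * ((3 * m + 1) / (2 * m + 2)) ^ (2 * m + 2) := by gcongr

lemma commitPenalty_le_sqrt_add {m : ℕ} (hm : 0 < m) {u : ℝ} (hu0 : 0 ≤ u) (hu1 : u ≤ 1) :
    commitPenalty m u ≤ √(2 * exp (-1) / m) + 2 * exp (-1) / m := by
  have hm0 : (0 : ℝ) < m := by exact_mod_cast hm
  set E := exp (-(m * u ^ 2)) with hE
  have hpow : (1 - u ^ 2) ^ m ≤ E := by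
    calc (1 - u ^ 2) ^ m ≤ exp (-u ^ 2) ^ m :=
          pow_le_pow_left₀ (by nlinarith) (one_sub_le_exp_neg _) m
      _ = E := by rw [hE, ← exp_nat_mul]; ring_nf
  have hsq : 2 * u ^ 2 * E ≤ 2 * exp (-1) / m := by
    rw [le_div_iff₀ hm0]
    nlinarith [mul_exp_neg_le_exp_neg_one (m * u ^ 2)]
  have hlin : 2 * u * E ≤ √(2 * exp (-1) / m) := by
    refine le_sqrt_of_sq_le ?_
    have hE2 : E ^ 2 = exp (-(2 * m * u ^ 2)) := by rw [hE, ← exp_nat_mul]; ring_nf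
    rw [le_div_iff₀ hm0]
    calc (2 * u * E) ^ 2 * m = 2 * (2 * m * u ^ 2 * exp (-(2 * m * u ^ 2))) := by
          rw [← hE2]; ring
      _ ≤ 2 * exp (-1) := by linarith [mul_exp_neg_le_exp_neg_one (2 * m * u ^ 2)]
  calc commitPenalty m u ≤ 2 * u * (1 + u) * E := by
        unfold commitPenalty; gcongr
    _ = 2 * u * E + 2 * u ^ 2 * E := by ring
    _ ≤ _ := add_le_add hlin hsq

lemma le_rpow_one_third_iff {x y : ℝ} (hx : 0 ≤ x) (hy : 0 ≤ y) :
    x ≤ y ^ ((1 : ℝ) / 3) ↔ x ^ 3 ≤ y := by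
  rw [one_div, le_rpow_inv_iff_of_pos hx hy (by norm_num), ← rpow_natCast]
  norm_num

lemma ceil_rpow_two_thirds_eq {y : ℝ} (hy : 0 ≤ y) {m : ℕ} (hm : m ≠ 0)
    (hlo : ((m : ℝ) - 1) ^ 3 < y ^ 2) (hhi : y ^ 2 ≤ m ^ 3) : ⌈y ^ ((2 : ℝ) / 3)⌉₊ = m := by
  have hm1 : (1 : ℝ) ≤ m := by exact_mod_cast Nat.one_le_iff_ne_zero.2 hm
  rw [Nat.ceil_eq_iff hm, Nat.cast_sub (Nat.one_le_iff_ne_zero.2 hm), Nat.cast_one,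
    show (2 : ℝ) / 3 = 2 * 3⁻¹ by norm_num, rpow_mul hy, rpow_two,
    lt_rpow_inv_iff_of_pos (by linarith) (by positivity) (by norm_num),
    rpow_inv_le_iff_of_pos (by positivity) (by positivity) (by norm_num)]
  norm_num [hlo, hhi]

lemma commitPenalty_add_le_of_small {g m : ℕ} (hm : 2 ≤ m)
    (hlo : ((m : ℝ) - 1) ^ 3 < ((g : ℝ) / 2) ^ 2) (hhi : ((g : ℝ) / 2) ^ 2 ≤ m ^ 3)
    (hnum : (2 * ((3 * m + 1) / (2 * m + 2)) ^ (2 * m + 2) / ((m - 1) * 2 ^ m)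
      + (m + 1) / g : ℝ) ^ 3 ≤ 12 / g) {u : ℝ} (hu0 : 0 ≤ u) (hu1 : u ≤ 1) :
    commitPenalty ⌈((g : ℝ) / 2) ^ ((2 : ℝ) / 3)⌉₊ u + (⌈((g : ℝ) / 2) ^ ((2 : ℝ) / 3)⌉₊ + 1) / g
      ≤ (12 / (g : ℝ)) ^ ((1 : ℝ) / 3) := by
  rw [ceil_rpow_two_thirds_eq (by positivity) (by omega) hlo hhi]
  have hpen := commitPenalty_le_of_two_le hm hu0 hu1
  have hpen0 := commitPenalty_nonneg m hu0 hu1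
  refine (le_rpow_one_third_iff (by positivity) (by positivity)).2 (le_trans ?_ hnum)
  gcongr

lemma commitPenalty_add_le_of_large {g : ℕ} (hg : 33 ≤ g) {u : ℝ} (hu0 : 0 ≤ u) (hu1 : u ≤ 1) :
    commitPenalty ⌈((g : ℝ) / 2) ^ ((2 : ℝ) / 3)⌉₊ u + (⌈((g : ℝ) / 2) ^ ((2 : ℝ) / 3)⌉₊ + 1) / g
      ≤ (12 / (g : ℝ)) ^ ((1 : ℝ) / 3) := by
  have hg0 : (33 : ℝ) ≤ g := by exact_mod_cast hg
  set y := ((g : ℝ) / 2) ^ ((2 : ℝ) / 3) with hy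
  set m := ⌈y⌉₊
  set x := (g : ℝ) ^ ((1 : ℝ) / 3) with hx
  have hx0 : 0 < x := by positivity
  have hx3 : x ^ 3 = g := by
    rw [hx, ← rpow_natCast, ← rpow_mul (by positivity)]; norm_num
  have hy3 : y ^ 3 = (x ^ 3 / 2) ^ 2 := by
    rw [hx3, hy, ← rpow_natCast, ← rpow_mul (by positivity)]; norm_num
  -- `y = 4 ^ (-1/3) x ^ 2` with `4 ^ (-1/3) ≈ 0.62996`
  have hy_lo : 5 / 8 * x ^ 2 ≤ y := by
    refine le_of_pow_le_pow_left₀ (n := 3) (by norm_num) (by positivity) ?_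
    rw [hy3]; nlinarith [pow_pos hx0 6]
  have hy_hi : y ≤ 63 / 100 * x ^ 2 := by
    refine le_of_pow_le_pow_left₀ (n := 3) (by norm_num) (by positivity) ?_
    rw [hy3]; nlinarith [pow_pos hx0 6]
  have hx_lo : 16 / 5 ≤ x := by
    refine le_of_pow_le_pow_left₀ (n := 3) (by norm_num) hx0.le ?_
    rw [hx3]; linarith
  have hm_lo : 5 / 8 * x ^ 2 ≤ m := hy_lo.trans (Nat.le_ceil y)
  have hm_hi : (m : ℝ) + 1 ≤ 63 / 100 * x ^ 2 + 2 := by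
    linarith [Nat.ceil_lt_add_one (show 0 ≤ y by positivity)]
  have hm0 : 0 < m := by exact_mod_cast (show (0 : ℝ) < m by nlinarith)
  have hD : 2 * exp (-1) / m ≤ 118 / 100 / x ^ 2 := by
    rw [div_le_div_iff₀ (by positivity) (by positivity)]
    nlinarith [exp_neg_one_lt_d9]
  have hsqrtD : √(2 * exp (-1) / m) ≤ 109 / 100 / x := by
    rw [sqrt_le_left (by positivity)]
    calc 2 * exp (-1) / m ≤ 118 / 100 / x ^ 2 := hD
      _ ≤ (109 / 100 / x) ^ 2 := by rw [div_pow]; gcongr; norm_num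
  have hrhs : 2289 / 1000 / x ≤ (12 / (g : ℝ)) ^ ((1 : ℝ) / 3) := by
    rw [div_rpow (by norm_num) (by positivity), ← hx]
    gcongr
    rw [one_div, le_rpow_inv_iff_of_pos (by norm_num) (by norm_num) (by norm_num)]
    norm_num
  have hfinal : 109 / 100 / x + 118 / 100 / x ^ 2 + (63 / 100 * x ^ 2 + 2) / x ^ 3
      ≤ 2289 / 1000 / x := by
    rw [div_add_div _ _ hx0.ne' (by positivity), div_add_div _ _ (by positivity) (by positivity),
      div_le_div_iff₀ (by positivity) hx0]
    nlinarith [pow_pos hx0 5, pow_pos hx0 4]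
  calc commitPenalty m u + (m + 1) / g
      ≤ 109 / 100 / x + 118 / 100 / x ^ 2 + (63 / 100 * x ^ 2 + 2) / x ^ 3 := by
        rw [← hx3]
        gcongr
        linarith [commitPenalty_le_sqrt_add hm0 hu0 hu1]
    _ ≤ _ := hfinal.trans hrhs

theorem commitPenalty_add_le {g : ℕ} (hg : 12 ≤ g) {u : ℝ} (hu0 : 0 ≤ u) (hu1 : u ≤ 1) :
    commitPenalty ⌈((g : ℝ) / 2) ^ ((2 : ℝ) / 3)⌉₊ u + (⌈((g : ℝ) / 2) ^ ((2 : ℝ) / 3)⌉₊ + 1) / g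
      ≤ (12 / (g : ℝ)) ^ ((1 : ℝ) / 3) := by
  rcases (by omega : g ≤ 16 ∨ 17 ≤ g ∧ g ≤ 22 ∨ 23 ≤ g ∧ g ≤ 29 ∨ 30 ≤ g ∧ g ≤ 32 ∨ 33 ≤ g)
    with hg' | hg' | hg' | hg' | hg'
  · interval_cases g <;>
      refine commitPenalty_add_le_of_small (m := 4) ?_ ?_ ?_ ?_ hu0 hu1 <;> norm_num
  · obtain ⟨hg₁, hg₂⟩ := hg'
    interval_cases g <;>
      refine commitPenalty_add_le_of_small (m := 5) ?_ ?_ ?_ ?_ hu0 hu1 <;> norm_num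
  · obtain ⟨hg₁, hg₂⟩ := hg'
    interval_cases g <;>
      refine commitPenalty_add_le_of_small (m := 6) ?_ ?_ ?_ ?_ hu0 hu1 <;> norm_num
  · obtain ⟨hg₁, hg₂⟩ := hg'
    interval_cases g <;>
      refine commitPenalty_add_le_of_small (m := 7) ?_ ?_ ?_ ?_ hu0 hu1 <;> norm_num
  · exact commitPenalty_add_le_of_large hg' hu0 hu1

lemma sub_mul_pow_eq_mul_commitPenalty {p q : ℝ} (hp : 0 < p) (hpq : p ≤ q) (m : ℕ) :
    (q - p) * (4 * p * q / (p + q) ^ 2) ^ (m + 1) = p * commitPenalty m ((q - p) / (q + p)) := by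
  have hpq0 : 0 < q + p := by linarith
  have hpq1 : 0 < p + q := by linarith
  have hbase : 4 * p * q / (p + q) ^ 2 = 1 - ((q - p) / (q + p)) ^ 2 := by
    field_simp
    ring
  rw [hbase, pow_succ, commitPenalty]
  field_simp
  ring

theorem integral_pairCost_le_of_threshold {Ω : Type*} [MeasurableSpace Ω] {P : Measure Ω}
    [IsProbabilityMeasure P] {X Y : Ω → ℝ} (hXm : Measurable X) (hYm : Measurable Y)
    (hXY : IndepFun X Y P) {g k : ℕ} (hg : 12 ≤ g)
    (hk : k = ⌈((g : ℝ) / 2) ^ ((2 : ℝ) / 3)⌉₊ + 1) {p q : ℝ} (hp : 0 < p) (hpq : p ≤ q)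
    (hX : HasLaw X (gammaMeasure k (g / p)) P) (hY : HasLaw Y (gammaMeasure k (g / q)) P) :
    ∫ ω, (p + min (X ω) (Y ω) + (q - p) * (if Y ω < X ω then 1 else 0)) ∂P
      ≤ (1 + (12 / (g : ℝ)) ^ ((1 : ℝ) / 3)) * p := by
  set m := ⌈((g : ℝ) / 2) ^ ((2 : ℝ) / 3)⌉₊
  subst hk
  have hu0 : 0 ≤ (q - p) / (q + p) := div_nonneg (by linarith) (by linarith)
  have hu1 : (q - p) / (q + p) ≤ 1 := (div_le_one (by linarith)).2 (by linarith)
  calc _ ≤ p + ((m + 1 : ℕ) : ℝ) * p / g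
        + (q - p) * (4 * p * q / (p + q) ^ 2) ^ ((m + 1 : ℕ) : ℝ) :=
        integral_pairCost_le hXm hYm hXY (by positivity) (by positivity) hp hpq hX hY
    _ = p + p * (commitPenalty m ((q - p) / (q + p)) + (m + 1) / g) := by
        rw [rpow_natCast, sub_mul_pow_eq_mul_commitPenalty hp hpq]
        push_cast
        ring
    _ ≤ p + p * (12 / (g : ℝ)) ^ ((1 : ℝ) / 3) := by
        gcongr
        exact commitPenalty_add_le hg hu0 hu1
    _ = _ := by ring

lemma sum_add_sum_pairs_le {n : ℕ} {p : ℕ → ℝ} {c : ℕ → ℕ → ℝ} {ε : ℝ} (hε : 0 ≤ ε)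
    (hp : ∀ i ∈ Finset.Icc 1 n, 0 ≤ p i)
    (hc : ∀ i ∈ Finset.Icc 1 n, ∀ j ∈ Finset.Icc (i + 1) n, c i j ≤ (1 + ε) * p i) :
    ∑ j ∈ Finset.Icc 1 n, p j + ∑ i ∈ Finset.Icc 1 n, ∑ j ∈ Finset.Icc (i + 1) n, c i j
      ≤ (1 + ε) * ∑ i ∈ Finset.Icc 1 n, ((n : ℝ) - i + 1) * p i := by
  calc _ ≤ ∑ i ∈ Finset.Icc 1 n, (p i + ((n : ℝ) - i) * ((1 + ε) * p i)) := by
        rw [Finset.sum_add_distrib]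
        gcongr with i hi
        calc ∑ j ∈ Finset.Icc (i + 1) n, c i j ≤ ∑ _j ∈ Finset.Icc (i + 1) n, (1 + ε) * p i :=
              Finset.sum_le_sum (hc i hi)
          _ = ((n : ℝ) - i) * ((1 + ε) * p i) := by
              rw [Finset.sum_const, Nat.card_Icc, nsmul_eq_mul, Nat.add_sub_add_right,
                Nat.cast_sub (Finset.mem_Icc.1 hi).2]
    _ ≤ ∑ i ∈ Finset.Icc 1 n, (1 + ε) * (((n : ℝ) - i + 1) * p i) := by
        gcongr with i hi
        nlinarith [hp i hi]
    _ = _ := by rw [Finset.mul_sum]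

open MeasureTheory ProbabilityTheory Finset in
theorem stmt_12_general (g : ℕ) (hg : 12 ≤ g) (k : ℕ)
    (hk : k = ⌈((g : ℝ) / 2) ^ ((2 : ℝ) / 3)⌉₊ + 1)
    (n : ℕ) (p : ℕ → ℝ)
    (hp : ∀ i ∈ Finset.Icc 1 n, 0 < p i)
    (hmono : ∀ i j, 1 ≤ i → i ≤ j → j ≤ n → p i ≤ p j)
    {Ω : Type*} [MeasurableSpace Ω] (P : Measure Ω) [IsProbabilityMeasure P]
    (τ : ℕ → Ω → ℝ) (hτ : ∀ i, Measurable (τ i))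
    (hind : iIndepFun (fun i : (Finset.Icc 1 n : Finset ℕ) => τ i) P)
    (hd : ∀ j ∈ Finset.Icc 1 n, P.map (τ j) = gammaMeasure (k : ℝ) ((g : ℝ) / p j)) :
    (∑ j ∈ Finset.Icc 1 n, p j)
      + ∑ i ∈ Finset.Icc 1 n, ∑ j ∈ Finset.Icc (i + 1) n,
          (∫ ω, (p i + min (τ i ω) (τ j ω)
              + (p j - p i) * (if τ j ω < τ i ω then 1 else 0)) ∂P)
    ≤ (1 + (12 / (g : ℝ)) ^ ((1 : ℝ) / 3))
        * ∑ i ∈ Finset.Icc 1 n, ((n : ℝ) - i + 1) * p i := by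
  refine sum_add_sum_pairs_le (by positivity) (fun i hi => (hp i hi).le) fun i hi j hj => ?_
  obtain ⟨hi₁, -⟩ := Finset.mem_Icc.1 hi
  obtain ⟨hij, hjn⟩ := Finset.mem_Icc.1 hj
  have hj' : j ∈ Finset.Icc 1 n := Finset.mem_Icc.2 ⟨by omega, hjn⟩
  have hindep : IndepFun (τ i) (τ j) P :=
    hind.indepFun (i := ⟨i, hi⟩) (j := ⟨j, hj'⟩) (by simp only [ne_eq, Subtype.mk.injEq]; omega)
  exact integral_pairCost_le_of_threshold (hτ i) (hτ j) hindep hg hk (hp i hi)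
    (hmono i j hi₁ (by omega) hjn) ⟨(hτ i).aemeasurable, hd i hi⟩ ⟨(hτ j).aemeasurable, hd j hj'⟩

open MeasureTheory ProbabilityTheory Finset in
/-- Expected competitive ratio of repeated Explore-Then-Commit with threshold
$k = \lceil (g/2)^{2/3}\rceil + 1$ is at most $1 + (12/g)^{1/3}$. -/
theorem stmt_12 (g : ℕ) (hg : 12 ≤ g) (k : ℕ)
    (hk : k = ⌈((g : ℝ) / 2) ^ ((2 : ℝ) / 3)⌉₊ + 1)
    (n : ℕ) (hn : 1 ≤ n) (p : ℕ → ℝ)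
    (hp : ∀ i ∈ Finset.Icc 1 n, 0 < p i)
    (hmono : ∀ i j, 1 ≤ i → i ≤ j → j ≤ n → p i ≤ p j)
    {Ω : Type*} [MeasurableSpace Ω] (P : Measure Ω) [IsProbabilityMeasure P]
    (τ : ℕ → Ω → ℝ) (hτ : ∀ i, Measurable (τ i))
    (hind : iIndepFun (fun i : (Finset.Icc 1 n : Finset ℕ) => τ i) P)
    (hd : ∀ j ∈ Finset.Icc 1 n, P.map (τ j) = gammaMeasure (k : ℝ) ((g : ℝ) / p j)) :
    (∑ j ∈ Finset.Icc 1 n, p j)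
      + ∑ i ∈ Finset.Icc 1 n, ∑ j ∈ Finset.Icc (i + 1) n,
          (∫ ω, (p i + min (τ i ω) (τ j ω)
              + (p j - p i) * (if τ j ω < τ i ω then 1 else 0)) ∂P)
    ≤ (1 + (12 / (g : ℝ)) ^ ((1 : ℝ) / 3))
        * ∑ i ∈ Finset.Icc 1 n, ((n : ℝ) - i + 1) * p i :=
  stmt_12_general g hg k hk n p hp hmono P τ hτ hind hd
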